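/- Let A ∈ ℝ^{n×n} and Q ∈ ℝ^{n×n}, let ρ(A) be the spectral radius of A, and suppose there exist constants c ∈ (0,1) and an integer m ≥ 1 such that ‖Q^m‖_∞ ≤ c and c · ρ(A)^m < 1. Then ‖Q^k ⊗ A^k‖_∞ → 0 as k → ∞, where ⊗ denotes the Kronecker product. -/

import Mathlib

open Kronecker

/-- Maximum absolute row sum norm. -/
noncomputable def infNorm {m : Type*} [Fintype m] (M : Matrix m m ℝ) : ℝ :=
  ⨆ i, ∑ j, |M i j|

/-- The spectral radius of a real square matrix. -/
noncomputable def specRad {n : ℕ} (M : Matrix (Fin n) (Fin n) ℝ) : ℝ :=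
  ⨆ μ : spectrum ℂ (M.map (algebraMap ℝ ℂ)), ‖(μ : ℂ)‖

/-!
By Gelfand's formula `‖Q^k‖^{1/k} → ρ(Q)` and `‖A^k‖^{1/k} → ρ(A)`, so the `k`-th root of
`‖Q^k‖ ‖A^k‖`, which dominates `‖Q^k ⊗ A^k‖_∞`, tends to `ρ(Q) ρ(A)`; by the root test the
product tends to zero once `ρ(Q) ρ(A) < 1`. That inequality comes from
`ρ(Q)^m ≤ ρ(Q^m) ≤ ‖Q^m‖_∞ ≤ c` and `c ρ(A)^m < 1`. All spectral radii are taken for the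
complexified matrices, in the complex Banach algebra normed by the `ℓ^∞` operator norm,
which is `infNorm`.
-/

open Filter Topology
open scoped ENNReal

theorem ENNReal.tendsto_zero_of_tendsto_rpow_one_div_lt_one {x : ℕ → ℝ≥0∞} {L : ℝ≥0∞}
    (hx : Tendsto (fun k : ℕ => x k ^ (1 / k : ℝ)) atTop (𝓝 L)) (hL : L < 1) :
    Tendsto x atTop (𝓝 0) := by
  obtain ⟨r, hLr, hr1⟩ := exists_between hL
  have hbound : ∀ᶠ k : ℕ in atTop, x k ≤ r ^ k := by
    filter_upwards [hx.eventually_lt_const hLr, eventually_gt_atTop 0] with k hk hk0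
    have hk0' : (0 : ℝ) < k := by exact_mod_cast hk0
    rw [one_div, ENNReal.rpow_inv_lt_iff hk0', ENNReal.rpow_natCast] at hk
    exact hk.le
  exact tendsto_of_tendsto_of_tendsto_of_le_of_le' tendsto_const_nhds
    (ENNReal.tendsto_pow_atTop_nhds_zero_of_lt_one hr1) (Eventually.of_forall fun _ => zero_le)
    hbound

section BanachAlgebra

variable {R S : Type*} [NormedRing R] [NormedAlgebra ℂ R] [CompleteSpace R]
  [NormedRing S] [NormedAlgebra ℂ S] [CompleteSpace S]

theorem spectrum.spectralRadius_ne_top (a : R) : spectralRadius ℂ a ≠ ∞ :=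
  ne_top_of_le_ne_top (by simp [ENNReal.mul_eq_top])
    (spectrum.spectralRadius_le_pow_nnnorm_pow_one_div ℂ a 0)

theorem tendsto_norm_pow_mul_norm_pow_of_spectralRadius_mul_lt_one {a : R} {b : S}
    (h : spectralRadius ℂ a * spectralRadius ℂ b < 1) :
    Tendsto (fun k : ℕ => ‖a ^ k‖ * ‖b ^ k‖) atTop (𝓝 0) := by
  have gelfand := ENNReal.Tendsto.mul
    (spectrum.pow_nnnorm_pow_one_div_tendsto_nhds_spectralRadius a)
    (.inr (spectrum.spectralRadius_ne_top b))
    (spectrum.pow_nnnorm_pow_one_div_tendsto_nhds_spectralRadius b)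
    (.inr (spectrum.spectralRadius_ne_top a))
  simp_rw [← ENNReal.mul_rpow_of_nonneg _ _ (one_div_nonneg.mpr (Nat.cast_nonneg _))] at gelfand
  have := ENNReal.tendsto_zero_of_tendsto_rpow_one_div_lt_one gelfand h
  simpa [Function.comp_def] using (ENNReal.tendsto_toReal ENNReal.zero_ne_top).comp this

end BanachAlgebra

attribute [local instance] Matrix.linftyOpNormedRing Matrix.linftyOpNormedAlgebra

section Matrix

variable {ι κ : Type*} [Fintype ι] [Fintype κ]

theorem infNorm_nonneg (M : Matrix ι ι ℝ) : 0 ≤ infNorm M :=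
  Real.iSup_nonneg fun _ => Finset.sum_nonneg fun _ _ => abs_nonneg _

theorem sum_abs_le_infNorm (M : Matrix ι ι ℝ) (i : ι) : ∑ j, |M i j| ≤ infNorm M :=
  le_ciSup (f := fun i => ∑ j, |M i j|) (Set.finite_range _).bddAbove i

theorem infNorm_kronecker_le (M : Matrix ι ι ℝ) (N : Matrix κ κ ℝ) :
    infNorm (M ⊗ₖ N) ≤ infNorm M * infNorm N := by
  refine Real.iSup_le (fun ⟨i, k⟩ => ?_) (mul_nonneg (infNorm_nonneg M) (infNorm_nonneg N))
  calc ∑ p : ι × κ, |(M ⊗ₖ N) (i, k) p|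
      = (∑ j, |M i j|) * ∑ l, |N k l| := by
        simp only [Matrix.kroneckerMap_apply, abs_mul, Finset.sum_mul_sum, Fintype.sum_prod_type]
    _ ≤ infNorm M * infNorm N :=
        mul_le_mul (sum_abs_le_infNorm M i) (sum_abs_le_infNorm N k)
          (Finset.sum_nonneg fun _ _ => abs_nonneg _) (infNorm_nonneg M)

variable [DecidableEq ι]

theorem infNorm_eq_norm_map_ofReal (M : Matrix ι ι ℝ) :
    infNorm M = ‖M.map (algebraMap ℝ ℂ)‖ := by
  rw [Matrix.linfty_opNorm_def, Finset.sup_univ_eq_ciSup, NNReal.coe_iSup]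
  simp [infNorm]

theorem Matrix.spectralRadius_le_nnnorm (M : Matrix ι ι ℂ) : spectralRadius ℂ M ≤ ‖M‖₊ := by
  cases isEmpty_or_nonempty ι
  · -- over an empty index type `‖1‖ = 0`, so there is no `NormOneClass`
    simp
  · exact spectrum.spectralRadius_le_nnnorm M

theorem spectralRadius_map_ofReal_pow_le {Q : Matrix ι ι ℝ} {m : ℕ} (hm : m ≠ 0) {c : ℝ}
    (hQ : infNorm (Q ^ m) ≤ c) :
    spectralRadius ℂ (Q.map (algebraMap ℝ ℂ)) ^ m ≤ ENNReal.ofReal c :=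
  calc spectralRadius ℂ (Q.map (algebraMap ℝ ℂ)) ^ m
      ≤ spectralRadius ℂ (Q.map (algebraMap ℝ ℂ) ^ m) := spectrum.spectralRadius_pow_le _ m hm
    _ ≤ ‖Q.map (algebraMap ℝ ℂ) ^ m‖₊ := Matrix.spectralRadius_le_nnnorm _
    _ = ENNReal.ofReal (infNorm (Q ^ m)) := by
        rw [infNorm_eq_norm_map_ofReal, Matrix.map_pow, ofReal_norm, enorm_eq_nnnorm]
    _ ≤ ENNReal.ofReal c := ENNReal.ofReal_le_ofReal hQ

end Matrix

theorem specRad_eq_toReal_spectralRadius {n : ℕ} (A : Matrix (Fin n) (Fin n) ℝ) :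
    specRad A = (spectralRadius ℂ (A.map (algebraMap ℝ ℂ))).toReal := by
  rw [specRad, spectralRadius, iSup_subtype', ENNReal.toReal_iSup fun _ => ENNReal.coe_ne_top]
  rfl

theorem spectralRadius_mul_spectralRadius_lt_one {n : ℕ} {A Q : Matrix (Fin n) (Fin n) ℝ}
    {c : ℝ} {m : ℕ} (hm : m ≠ 0) (hQ : infNorm (Q ^ m) ≤ c) (hcρ : c * specRad A ^ m < 1) :
    spectralRadius ℂ (Q.map (algebraMap ℝ ℂ)) * spectralRadius ℂ (A.map (algebraMap ℝ ℂ)) < 1 := by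
  set ρA := spectralRadius ℂ (A.map (algebraMap ℝ ℂ))
  have hc : 0 ≤ c := (infNorm_nonneg _).trans hQ
  have hρA : ENNReal.ofReal (specRad A) = ρA := by
    rw [specRad_eq_toReal_spectralRadius, ENNReal.ofReal_toReal
      ((Matrix.spectralRadius_le_nnnorm _).trans_lt ENNReal.coe_lt_top).ne]
  refine (pow_lt_one_iff hm).mp ?_
  calc (spectralRadius ℂ (Q.map (algebraMap ℝ ℂ)) * ρA) ^ m
      ≤ ENNReal.ofReal c * ENNReal.ofReal (specRad A) ^ m := by
        rw [mul_pow, hρA]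
        gcongr
        exact spectralRadius_map_ofReal_pow_le hm hQ
    _ = ENNReal.ofReal (c * specRad A ^ m) := by
        have hρ0 : 0 ≤ specRad A := Real.iSup_nonneg fun _ => norm_nonneg _
        rw [ENNReal.ofReal_mul hc, ENNReal.ofReal_pow hρ0]
    _ < 1 := ENNReal.ofReal_lt_one.mpr hcρ

theorem kronecker_pow_tendsto_zero_general {n : ℕ} (A Q : Matrix (Fin n) (Fin n) ℝ)
    (c : ℝ) (m : ℕ) (hm : 1 ≤ m)
    (hQ : infNorm (Q ^ m) ≤ c) (hcρ : c * specRad A ^ m < 1) :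
    Filter.Tendsto (fun k : ℕ => infNorm ((Q ^ k) ⊗ₖ (A ^ k)))
      Filter.atTop (nhds 0) := by
  have := FiniteDimensional.complete ℂ (Matrix (Fin n) (Fin n) ℂ)
  have hρ := spectralRadius_mul_spectralRadius_lt_one (by omega) hQ hcρ
  refine squeeze_zero (fun k => infNorm_nonneg _) (fun k => ?_)
    (tendsto_norm_pow_mul_norm_pow_of_spectralRadius_mul_lt_one hρ)
  calc infNorm ((Q ^ k) ⊗ₖ (A ^ k)) ≤ infNorm (Q ^ k) * infNorm (A ^ k) := infNorm_kronecker_le _ _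
    _ = _ := by
      rw [infNorm_eq_norm_map_ofReal, infNorm_eq_norm_map_ofReal, Matrix.map_pow, Matrix.map_pow]

/-- If `‖Q^m‖_∞ ≤ c` for some `c ∈ (0,1)` and `m ≥ 1`, and `c · ρ(A)^m < 1`,
then `‖Q^k ⊗ A^k‖_∞ → 0` as `k → ∞`. -/
theorem kronecker_pow_tendsto_zero {n : ℕ} (A Q : Matrix (Fin n) (Fin n) ℝ)
    (c : ℝ) (hc0 : 0 < c) (hc1 : c < 1) (m : ℕ) (hm : 1 ≤ m)
    (hQ : infNorm (Q ^ m) ≤ c) (hcρ : c * specRad A ^ m < 1) :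
    Filter.Tendsto (fun k : ℕ => infNorm ((Q ^ k) ⊗ₖ (A ^ k)))
      Filter.atTop (nhds 0) :=
  kronecker_pow_tendsto_zero_general A Q c m hm hQ hcρ
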